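/- arXiv:math/0306068 — 8 statements merged into one kernel-verified Lean document; each statement's English description precedes it below -/
import Mathlib

section
/- Let X be a quandle, S a nonempty set, and α a function assigning to each pair (x,y) ∈ X × X a map α_{x,y} : S × S → S. Then the binary operation on S × X defined by (a,x)*(b,y) = (α_{x,y}(a,b), x*y) makes S × X into a quandle (i.e., satisfies quandle axioms (I), (II), (III)) if and only if α is a dynamical quandle cocycle, i.e.: (1) α_{x,x}(a,a) = a for all x ∈ X, a ∈ S; (2) for all x,y ∈ X and b ∈ S the map a ↦ α_{x,y}(a,b) is a bijection of S; (3) α_{x*y,z}(α_{x,y}(a,b), c) = α_{x*z,y*z}(α_{x,z}(a,c), α_{y,z}(b,c)) for all x,y,z ∈ X and a,b,c ∈ S. -/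
/-- A binary operation `op` makes a set into a quandle:
(I) idempotence, (II) right translations are bijections, (III) right self-distributivity. -/
def IsQuandleOp {X : Type*} (op : X → X → X) : Prop :=
  (∀ a, op a a = a) ∧
  (∀ b, Function.Bijective fun a => op a b) ∧
  (∀ a b c, op (op a b) c = op (op a c) (op b c))

/-- `α` is a dynamical quandle cocycle on `S` over the quandle `(X, op)`. -/
def IsDynamicalQuandleCocycle {X S : Type*} (op : X → X → X)
    (α : X → X → S → S → S) : Prop :=
  (∀ (x : X) (a : S), α x x a a = a) ∧
  (∀ (x y : X) (b : S), Function.Bijective fun a => α x y a b) ∧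
  (∀ (x y z : X) (a b c : S),
    α (op x y) z (α x y a b) c = α (op x z) (op y z) (α x z a c) (α y z b c))

/-- The operation `(a,x)*(b,y) = (α_{x,y}(a,b), x*y)` on `S × X` is a quandle operation
if and only if `α` is a dynamical quandle cocycle. -/
theorem extension_isQuandle_iff_dynamical_cocycle
    {X S : Type*} [Nonempty S] (op : X → X → X) (hX : IsQuandleOp op)
    (α : X → X → S → S → S) :
    IsQuandleOp (fun p q : S × X => (α p.2 q.2 p.1 q.1, op p.2 q.2)) ↔
      IsDynamicalQuandleCocycle op α := by
  obtain ⟨hXi, hXb, hXd⟩ := hX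
  constructor
  · rintro ⟨hi, hb, hd⟩
    refine ⟨fun x a => ?_, fun x y b => ⟨fun a a' h => ?_, fun c => ?_⟩, fun x y z a b c => ?_⟩
    · exact congrArg Prod.fst (hi (a, x))
    · have := (hb (b, y)).1 (a₁ := (a, x)) (a₂ := (a', x)) (by simp [h])
      exact congrArg Prod.fst this
    · obtain ⟨⟨a, x'⟩, ha⟩ := (hb (b, y)).2 (c, op x y)
      have hx : x' = x := (hXb y).1 (congrArg Prod.snd ha)
      subst hx
      exact ⟨a, congrArg Prod.fst ha⟩
    · have := hd (a, x) (b, y) (c, z)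
      exact congrArg Prod.fst this
  · rintro ⟨hi, hb, hd⟩
    refine ⟨fun p => ?_, fun q => ⟨fun p p' h => ?_, fun r => ?_⟩, fun p q r => ?_⟩
    · exact Prod.ext (hi p.2 p.1) (hXi p.2)
    · have hx : p.2 = p'.2 := (hXb q.2).1 (congrArg Prod.snd h)
      have ha : p.1 = p'.1 := by
        apply (hb p.2 q.2 q.1).1
        have := congrArg Prod.fst h
        simpa [hx] using this
      exact Prod.ext ha hx
    · obtain ⟨x, hx⟩ := (hXb q.2).2 r.2
      obtain ⟨a, ha⟩ := (hb x q.2 q.1).2 r.1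
      exact ⟨(a, x), Prod.ext ha hx⟩
    · exact Prod.ext (hd p.2 q.2 r.2 p.1 q.1 r.1) (hXd p.2 q.2 r.2)
end

section
/- Let X be a quandle, G an abelian group carrying a quandle module structure (η_{x,y}, τ_{x,y}) over X, and κ a generalized quandle 2-cocycle with values in G. Then the function α_{x,y}(a,b) = η_{x,y}(a) + τ_{x,y}(b) + κ_{x,y} is a dynamical quandle cocycle, i.e.: (1) α_{x,x}(a,a) = a for all x ∈ X, a ∈ G; (2) for all x,y ∈ X and b ∈ G the map a ↦ α_{x,y}(a,b) is a bijection of G; (3) α_{x*y,z}(α_{x,y}(a,b), c) = α_{x*z,y*z}(α_{x,z}(a,c), α_{y,z}(b,c)) for all x,y,z ∈ X and a,b,c ∈ G. -/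
/-- A quandle module structure on an abelian group `G` over the quandle `(X, op)`:
automorphisms `η x y` and endomorphisms `τ x y` satisfying the quandle algebra axioms. -/
structure QuandleModule (X : Type*) (op : X → X → X) (G : Type*) [AddCommGroup G] where
  η : X → X → G ≃+ G
  τ : X → X → G →+ G
  eta_eta : ∀ x y z a, η (op x y) z (η x y a) = η (op x z) (op y z) (η x z a)
  eta_tau : ∀ x y z b, η (op x y) z (τ x y b) = τ (op x z) (op y z) (η y z b)
  tau_dist : ∀ x y z c,
    τ (op x y) z c = η (op x z) (op y z) (τ x z c) + τ (op x z) (op y z) (τ y z c)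
  tau_eta_diag : ∀ x a, τ x x a + η x x a = a

/-- κ is a generalized rack 2-cocycle for the quandle module `M`. -/
def IsGenRackTwoCocycle {X G : Type*} [AddCommGroup G] {op : X → X → X}
    (M : QuandleModule X op G) (κ : X → X → G) : Prop :=
  ∀ x y z, M.η (op x y) z (κ x y) + κ (op x y) z =
    M.η (op x z) (op y z) (κ x z) + M.τ (op x z) (op y z) (κ y z) + κ (op x z) (op y z)

/-- Given a quandle module and a generalized quandle 2-cocycle κ, the map
`α_{x,y}(a,b) = η_{x,y}(a) + τ_{x,y}(b) + κ_{x,y}` is a dynamical quandle cocycle. -/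
theorem quandleModule_cocycle_isDynamicalCocycle
    {X G : Type*} [AddCommGroup G] (op : X → X → X) (hX : IsQuandleOp op)
    (M : QuandleModule X op G) (κ : X → X → G)
    (hκ : IsGenRackTwoCocycle M κ) (hκq : ∀ x, κ x x = 0) :
    IsDynamicalQuandleCocycle op (fun x y a b => M.η x y a + M.τ x y b + κ x y) := by
  refine ⟨fun x a => ?_, fun x y b => ?_, fun x y z a b c => ?_⟩
  · simp only [hκq, add_zero]
    rw [add_comm]; exact M.tau_eta_diag x a
  · have : (fun a => M.η x y a + M.τ x y b + κ x y) =
        (fun a : G => a + (M.τ x y b + κ x y)) ∘ (M.η x y) := by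
      funext a; simp [add_assoc]
    rw [this]
    exact (Equiv.addRight _).bijective.comp (M.η x y).bijective
  · simp only [map_add]
    rw [M.eta_eta, M.eta_tau, M.tau_dist x y z c,
      show M.η (op x y) z (κ x y) = M.η (op x z) (op y z) (κ x z) +
        M.τ (op x z) (op y z) (κ y z) + κ (op x z) (op y z) - κ (op x y) z by
          rw [← hκ x y z]; abel]
    abel
end

section
/- Let p : Y → X be a surjective quandle homomorphism between finite quandles such that the cardinality of the fiber p⁻¹(x) is the same for all x ∈ X, and let S be a finite set with |S| = |p⁻¹(x)|. Then there exist a dynamical quandle cocycle α on S over X and a bijection e : Y → S × X such that the second component of e(y) is p(y) for all y ∈ Y, and e(y₁ * y₂) = e(y₁) * e(y₂) for all y₁, y₂ ∈ Y, where the operation on S × X is (a,x)*(b,y) = (α_{x,y}(a,b), x*y). In other words, Y is isomorphic over X to the extension S ×_α X. -/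
/-- (Andruskiewitsch–Graña) A surjective quandle homomorphism `p : Y → X` between finite
quandles all of whose fibers have the same cardinality `|S|` exhibits `Y` as a dynamical
extension `S ×_α X`: there are a dynamical quandle cocycle `α` and a bijection
`e : Y → S × X` over `X` which is a quandle isomorphism onto `S ×_α X`. -/
theorem surjective_quandleHom_is_dynamical_extension
    {X Y S : Type*} [Finite X] [Finite Y] [Finite S]
    (opX : X → X → X) (opY : Y → Y → Y)
    (hX : IsQuandleOp opX) (hY : IsQuandleOp opY)
    (p : Y → X) (hsurj : Function.Surjective p)
    (hhom : ∀ a b, p (opY a b) = opX (p a) (p b))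
    (hcard : ∀ x : X, Nat.card {y : Y // p y = x} = Nat.card S) :
    ∃ (α : X → X → S → S → S) (e : Y → S × X),
      IsDynamicalQuandleCocycle opX α ∧
      Function.Bijective e ∧
      (∀ y, (e y).2 = p y) ∧
      (∀ y₁ y₂, e (opY y₁ y₂) =
        (α (e y₁).2 (e y₂).2 (e y₁).1 (e y₂).1, opX (e y₁).2 (e y₂).2)) := by
  classical
  obtain ⟨hXidem, hXbij, hXdist⟩ := hX
  obtain ⟨hYidem, hYbij, hYdist⟩ := hY
  have hF : ∀ x : X, Nonempty ({y : Y // p y = x} ≃ S) := fun x => Finite.card_eq.mp (hcard x)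
  set F : ∀ x : X, S ≃ {y : Y // p y = x} := fun x => (hF x).some.symm with hFdef
  have hfib : ∀ (x y : X) (a b : S), p (opY (F x a).1 (F y b).1) = opX x y := by
    intro x y a b; rw [hhom, (F x a).2, (F y b).2]
  have key : ∀ (x x' : X) (v v' : Y) (hv : p v = x) (hv' : p v' = x'),
      x = x' → v = v' → (F x).symm ⟨v, hv⟩ = (F x').symm ⟨v', hv'⟩ := by
    intro x x' v v' hv hv' h hvv
    subst h; subst hvv; rfl
  refine ⟨fun x y a b => (F (opX x y)).symm ⟨opY (F x a).1 (F y b).1, hfib x y a b⟩,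
    fun y => ((F (p y)).symm ⟨y, rfl⟩, p y), ⟨?_, ?_, ?_⟩, ?_, fun y => rfl, ?_⟩
  · -- cocycle condition (1)
    intro x a
    have : (F x).symm ⟨(F x a).1, (F x a).2⟩ = a := by
      simpa using (F x).symm_apply_apply a
    show (F (opX x x)).symm ⟨opY (F x a).1 (F x a).1, hfib x x a a⟩ = a
    rw [key (opX x x) x _ (F x a).1 _ (F x a).2 (hXidem x) (hYidem _), this]
  · -- cocycle condition (2): injectivity + finiteness
    intro x y b
    refine Finite.injective_iff_bijective.mp ?_
    intro a a' h
    have h1 : (⟨opY (F x a).1 (F y b).1, hfib x y a b⟩ : {z : Y // p z = opX x y}) =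
        ⟨opY (F x a').1 (F y b).1, hfib x y a' b⟩ := (F (opX x y)).symm.injective h
    have h2 : opY (F x a).1 (F y b).1 = opY (F x a').1 (F y b).1 := congrArg Subtype.val h1
    have h3 : (F x a).1 = (F x a').1 := (hYbij (F y b).1).1 h2
    exact (F x).injective (Subtype.ext h3)
  · -- cocycle condition (3)
    intro x y z a b c
    have e1 : (F (opX x y)) ((F (opX x y)).symm ⟨opY (F x a).1 (F y b).1, hfib x y a b⟩) =
        ⟨opY (F x a).1 (F y b).1, hfib x y a b⟩ := (F (opX x y)).apply_symm_apply _
    have e2 : (F (opX x z)) ((F (opX x z)).symm ⟨opY (F x a).1 (F z c).1, hfib x z a c⟩) =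
        ⟨opY (F x a).1 (F z c).1, hfib x z a c⟩ := (F (opX x z)).apply_symm_apply _
    have e3 : (F (opX y z)) ((F (opX y z)).symm ⟨opY (F y b).1 (F z c).1, hfib y z b c⟩) =
        ⟨opY (F y b).1 (F z c).1, hfib y z b c⟩ := (F (opX y z)).apply_symm_apply _
    refine key _ _ _ _ _ _ (hXdist x y z) ?_
    rw [congrArg Subtype.val e1, congrArg Subtype.val e2, congrArg Subtype.val e3]
    exact hYdist _ _ _
  · -- bijectivity of e
    refine Function.bijective_iff_has_inverse.mpr ⟨fun q => (F q.2 q.1).1, ?_, ?_⟩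
    · intro y
      have : (F (p y)) ((F (p y)).symm ⟨y, rfl⟩) = ⟨y, rfl⟩ := (F (p y)).apply_symm_apply _
      simp [congrArg Subtype.val this]
    · rintro ⟨a, x⟩
      refine Prod.ext ?_ (F x a).2
      show (F (p (F x a).1)).symm ⟨(F x a).1, rfl⟩ = a
      rw [key (p (F x a).1) x (F x a).1 (F x a).1 rfl (F x a).2 (F x a).2 rfl]
      simpa using (F x).symm_apply_apply a
  · -- e is a homomorphism
    intro y₁ y₂
    refine Prod.ext ?_ (hhom y₁ y₂)
    show (F (p (opY y₁ y₂))).symm ⟨opY y₁ y₂, rfl⟩ = _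
    have e1 : (F (p y₁)) ((F (p y₁)).symm ⟨y₁, rfl⟩) = ⟨y₁, rfl⟩ := (F (p y₁)).apply_symm_apply _
    have e2 : (F (p y₂)) ((F (p y₂)).symm ⟨y₂, rfl⟩) = ⟨y₂, rfl⟩ := (F (p y₂)).apply_symm_apply _
    refine key _ _ _ _ _ _ (hhom y₁ y₂) ?_
    rw [congrArg Subtype.val e1, congrArg Subtype.val e2]
end

section
/- Let H be a group acting on the left by automorphisms on an abelian group N written additively, let γ : H → N be any function, and define the group coboundary θ(x,y) = γ(xy) − γ(x) − x·γ(y) for x,y ∈ H. Then for all x,y ∈ H, κ_{x,y} := θ(y,x) − θ(yxy⁻¹, y) equals the quandle coboundary δ_Q γ(x,y) := γ(yxy⁻¹) − y·γ(x) − γ(y) + (yxy⁻¹)·γ(y). In particular, if θ is a group coboundary then the associated quandle 2-cocycle κ is a quandle coboundary. -/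
/-- Let `H` act on the abelian group `N` by automorphisms, let `γ : H → N`, and let
`θ(x,y) = γ(xy) − γ(x) − x·γ(y)` be the group coboundary of `γ`.  Then the associated
quandle 2-cocycle `κ_{x,y} = θ(y,x) − θ(yxy⁻¹,y)` equals the quandle coboundary
`δ_Q γ(x,y) = γ(yxy⁻¹) − y·γ(x) − γ(y) + (yxy⁻¹)·γ(y)`.  In particular, if `θ` is a
group coboundary then `κ` is a quandle coboundary. -/
theorem groupCoboundary_gives_quandleCoboundary
    {H N : Type*} [Group H] [AddCommGroup N] [DistribMulAction H N]
    (γ : H → N) (θ : H → H → N)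
    (hθ : ∀ x y : H, θ x y = γ (x * y) - γ x - x • γ y) :
    ∀ x y : H,
      θ y x - θ (y * x * y⁻¹) y =
        γ (y * x * y⁻¹) - y • γ x - γ y + (y * x * y⁻¹) • γ y := by
  intro x y
  rw [hθ, hθ]
  have : y * x * y⁻¹ * y = y * x := by group
  rw [this]
  abel
end

section
/- Let X be a quandle, S a set, and β : X × X → Sym(S) a quandle 2-cocycle valued in the symmetric group of S, where Sym(S) acts on S on the right (write a·g for the action, with a·(gh) = (a·g)·h). Then the set E(X,S,β) = S × X with the binary operation (a₁,x₁)*(a₂,x₂) = (a₁·β(x₁,x₂), x₁*x₂) is a quandle: it satisfies (I) idempotence, (II) bijectivity of right translations, and (III) right self-distributivity. -/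
/-- Let `X` be a quandle and `β : X × X → Sym(S)` a quandle 2-cocycle valued in the
symmetric group of `S`, acting on `S` on the right (so the product `g·h` in right-action
order is `Equiv.Perm` multiplication `h * g` in Mathlib's convention:
`a·(g·h) = (a·g)·h`, with `a·g = g a`).  Then `E(X,S,β) = S × X` with the operation
`(a₁,x₁)*(a₂,x₂) = (a₁·β(x₁,x₂), x₁*x₂)` is a quandle. -/
theorem nonabelian_extension_isQuandle
    {X S : Type*} (op : X → X → X) (hX : IsQuandleOp op)
    (β : X → X → Equiv.Perm S)
    (hcoc : ∀ x₁ x₂ x₃ : X,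
      β (op x₁ x₂) x₃ * β x₁ x₂ = β (op x₁ x₃) (op x₂ x₃) * β x₁ x₃)
    (hq : ∀ x : X, β x x = 1) :
    IsQuandleOp (fun p q : S × X => (β p.2 q.2 p.1, op p.2 q.2)) := by
  obtain ⟨hid, hbij, hdist⟩ := hX
  refine ⟨?_, ?_, ?_⟩
  · rintro ⟨a, x⟩
    simp [hq, hid]
  · rintro ⟨b, y⟩
    constructor
    · rintro ⟨a₁, x₁⟩ ⟨a₂, x₂⟩ h
      simp only [Prod.mk.injEq] at h
      have hx : x₁ = x₂ := (hbij y).1 h.2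
      subst hx
      have ha : a₁ = a₂ := (β x₁ y).injective h.1
      simp [ha]
    · rintro ⟨c, z⟩
      obtain ⟨x, hx⟩ := (hbij y).2 z
      exact ⟨((β x y)⁻¹ c, x), by simp [hx]⟩
  · rintro ⟨a₁, x₁⟩ ⟨a₂, x₂⟩ ⟨a₃, x₃⟩
    simp only [Prod.mk.injEq]
    refine ⟨?_, hdist _ _ _⟩
    have := hcoc x₁ x₂ x₃
    have h2 := congrArg (fun g => g a₁) this
    simp only [Equiv.Perm.mul_apply] at h2
    exact h2
end

section
/- Let X be a rack, x₀ ∈ X, and s : X → Sym(X) a map assigning to each x ∈ X a bijection of X with s(x)(x₀) = x for all x ∈ X. For y ∈ X let φ_y : X → X be the bijection a ↦ a*y, and define t(x,y) = s(x)·φ_y·s(x*y)⁻¹, where the product of permutations is taken in right-action order (g·h is the function z ↦ h(g(z)), so that t(x,y) is the function s(x*y)⁻¹ ∘ φ_y ∘ s(x)). Then: (i) t(x,y)(x₀) = x₀ for all x,y ∈ X; (ii) t satisfies the rack 2-cocycle condition t(x₁,x₂)·t(x₁*x₂,x₃) = t(x₁,x₃)·t(x₁*x₃, x₂*x₃) for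 all x₁,x₂,x₃ ∈ X (products in the same right-action order). Consequently, for any group homomorphism ρ from the stabilizer of x₀ to a group, β(x,y) = ρ(t(x,y)) is a rack 2-cocycle. -/
/-- A binary operation `op` makes a set into a rack: right translations are bijections
and the operation is right self-distributive. -/
def IsRackOp {X : Type*} (op : X → X → X) : Prop :=
  (∀ b, Function.Bijective fun a => op a b) ∧
  (∀ a b c, op (op a b) c = op (op a c) (op b c))

/-- (Andruskiewitsch–Graña)  Let `X` be a rack, `x₀ ∈ X`, `φ_y` the right-translation
permutation `a ↦ a*y`, and `s : X → Sym(X)` with `s(x)(x₀) = x`.  Put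
`t(x,y) = s(x)·φ_y·s(x*y)⁻¹` in right-action order, i.e. the permutation
`s(x*y)⁻¹ ∘ φ_y ∘ s(x)` (Mathlib product `s(x*y)⁻¹ * φ_y * s(x)`).  Then every `t(x,y)`
fixes `x₀`, `t` satisfies the rack 2-cocycle condition (in right-action order,
`t(x₁,x₂)·t(x₁*x₂,x₃) = t(x₁,x₃)·t(x₁*x₃,x₂*x₃)`, i.e. in Mathlib's convention
`t(x₁*x₂,x₃) * t(x₁,x₂) = t(x₁*x₃,x₂*x₃) * t(x₁,x₃)`), and consequently for any group
homomorphism `ρ` from the stabilizer of `x₀` to a group, `β(x,y) = ρ(t(x,y))` is a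
rack 2-cocycle. -/
theorem stabilizer_twoCocycle_from_section
    {X : Type*} (op : X → X → X) (hX : IsRackOp op) (x₀ : X)
    (φ : X → Equiv.Perm X) (hφ : ∀ y a, φ y a = op a y)
    (s : X → Equiv.Perm X) (hs : ∀ x, s x x₀ = x)
    (t : X → X → Equiv.Perm X)
    (ht : ∀ x y, t x y = (s (op x y))⁻¹ * φ y * s x) :
    ∃ hmem : ∀ x y : X, t x y ∈ MulAction.stabilizer (Equiv.Perm X) x₀,
      (∀ x₁ x₂ x₃ : X,
        t (op x₁ x₂) x₃ * t x₁ x₂ = t (op x₁ x₃) (op x₂ x₃) * t x₁ x₃) ∧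
      (∀ (H : Type) [Group H]
        (ρ : ↥(MulAction.stabilizer (Equiv.Perm X) x₀) →* H) (x₁ x₂ x₃ : X),
          ρ ⟨t (op x₁ x₂) x₃, hmem _ _⟩ * ρ ⟨t x₁ x₂, hmem _ _⟩ =
            ρ ⟨t (op x₁ x₃) (op x₂ x₃), hmem _ _⟩ * ρ ⟨t x₁ x₃, hmem _ _⟩) := by
  have hmem : ∀ x y : X, t x y ∈ MulAction.stabilizer (Equiv.Perm X) x₀ := by
    intro x y
    rw [MulAction.mem_stabilizer_iff, ht]
    simp only [Equiv.Perm.smul_def, Equiv.Perm.mul_apply, hφ, hs]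
    rw [Equiv.Perm.inv_def, Equiv.symm_apply_eq, hs]
  have hcoc : ∀ x₁ x₂ x₃ : X,
      t (op x₁ x₂) x₃ * t x₁ x₂ = t (op x₁ x₃) (op x₂ x₃) * t x₁ x₃ := by
    intro x₁ x₂ x₃
    ext a
    simp only [ht, Equiv.Perm.mul_apply, Equiv.Perm.coe_inv, Equiv.apply_symm_apply, hφ]
    rw [hX.2 x₁ x₂ x₃, hX.2 (s x₁ a) x₂ x₃]
  refine ⟨hmem, hcoc, ?_⟩
  intro H _ ρ x₁ x₂ x₃
  rw [← map_mul, ← map_mul]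
  congr 1
  exact Subtype.ext (hcoc x₁ x₂ x₃)
end

section
/- Let X be a quandle, x₀ ∈ X, and s : X → Sym(X) a map such that for every x ∈ X, s(x) is a rack automorphism of X (i.e. s(x)(a*b) = s(x)(a) * s(x)(b) for all a,b) and s(x)(x₀) = x. Define t(x,y) = s(x)·φ_y·s(x*y)⁻¹ in right-action order (i.e. as the function s(x*y)⁻¹ ∘ φ_y ∘ s(x)), where φ_y(a) = a*y. Then t(x,x) = φ_{x₀} for all x ∈ X. Consequently, for a group homomorphism ρ defined on the stabilizer of x₀ in Sym(X), the 2-cocycle β = ρ∘t satisfies β(x,x) = 1 for all x (i.e. is a quandle 2-cocycle) if and only if ρ(φ_{x₀}) = 1. -/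
/-- Let `X` be a quandle, `x₀ ∈ X`, `φ_y` the right-translation permutation `a ↦ a*y`,
and `s : X → Sym(X)` with each `s(x)` a rack automorphism satisfying `s(x)(x₀) = x`.
With `t(x,y) = s(x)·φ_y·s(x*y)⁻¹` in right-action order (the permutation
`s(x*y)⁻¹ ∘ φ_y ∘ s(x)`), one has `t(x,x) = φ_{x₀}` for all `x`.  Consequently, for a
group homomorphism `ρ` on the stabilizer of `x₀` in `Sym(X)`, the 2-cocycle `β = ρ∘t`
satisfies `β(x,x) = 1` for all `x` if and only if `ρ(φ_{x₀}) = 1`. -/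
theorem diagonal_twoCocycle_eq_phi
    {X : Type*} (op : X → X → X) (hX : IsQuandleOp op) (x₀ : X)
    (φ : X → Equiv.Perm X) (hφ : ∀ y a, φ y a = op a y)
    (s : X → Equiv.Perm X)
    (hhom : ∀ x a b, s x (op a b) = op (s x a) (s x b))
    (hs : ∀ x, s x x₀ = x)
    (t : X → X → Equiv.Perm X)
    (ht : ∀ x y, t x y = (s (op x y))⁻¹ * φ y * s x) :
    ∃ (hmem : φ x₀ ∈ MulAction.stabilizer (Equiv.Perm X) x₀)
      (heq : ∀ x : X, t x x = φ x₀),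
      ∀ (H : Type) [Group H]
        (ρ : ↥(MulAction.stabilizer (Equiv.Perm X) x₀) →* H),
          (∀ x : X, ρ ⟨t x x, (heq x) ▸ hmem⟩ = 1) ↔ ρ ⟨φ x₀, hmem⟩ = 1 := by

  obtain ⟨hidem, hbij, hdist⟩ := hX
  have hmem : φ x₀ ∈ MulAction.stabilizer (Equiv.Perm X) x₀ := by
    simp only [MulAction.mem_stabilizer_iff, Equiv.Perm.smul_def, hφ, hidem]
  have heq : ∀ x : X, t x x = φ x₀ := by
    intro x
    ext a
    rw [ht, hidem]
    simp only [Equiv.Perm.mul_apply, hφ]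
    have : op (s x a) x = s x (op a x₀) := by
      rw [hhom, hs]
    rw [this]
    simp
  refine ⟨hmem, heq, ?_⟩
  intro H _ ρ
  constructor
  · intro h
    have := h x₀
    have he : (⟨t x₀ x₀, (heq x₀) ▸ hmem⟩ : ↥(MulAction.stabilizer (Equiv.Perm X) x₀))
        = ⟨φ x₀, hmem⟩ := Subtype.ext (heq x₀)
    rwa [he] at this
  · intro h x
    have he : (⟨t x x, (heq x) ▸ hmem⟩ : ↥(MulAction.stabilizer (Equiv.Perm X) x₀))
        = ⟨φ x₀, hmem⟩ := Subtype.ext (heq x)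
    rw [he, h]
end

section
/- Let X be a quandle, G_X its enveloping group, and G an abelian group with a left G_X-action by automorphisms (x·a denotes the action of the image of x ∈ X). Consider the bead transformation with κ = 0: a braid word w on k strands (a list of letters σ_j^{±1}, 1 ≤ j ≤ k−1) transforms a bottom color vector x⃗ ∈ X^k and bead vector a⃗ ∈ G^k, letter by letter, by: σ_j replaces (x_j, x_{j+1}) by (x_{j+1}, x_j * x_{j+1}) and (a_j, a_{j+1}) by (a_{j+1}, x_{j+1}·a_j + a_{j+1} − (x_j*x_{j+1})·a_{j+1}), leaving other entries fixed, and σ_j^{−1} applies the inverse transformation. Let (y⃗, b⃗) be the resulting top vectors. Then the weighted sum is preserved: WS_{y⃗}(b⃗) = WS_{x⃗}(a⃗), where WS_{x⃗}(a⃗) = Σ_{i=1}^{k} (x_k·x_{k−1}·…·x_{i+1})·a_i (the coefficient of a_k being the identity), the products x_k…x_{i+1} being taken in G_X. -/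
open Quandles

/-- The canonical map from a quandle to its enveloping group. -/
def iota (X : Type*) [Quandle X] (x : X) : Rack.EnvelGroup X := Rack.toEnvelGroup X x

/-- The bead transformation (with `κ = 0`) of the braid generator `σ_j` (strands are
indexed `0, 1, 2, …`; `σ_j` involves strands `j` and `j+1`): colors transform by
`(x_j, x_{j+1}) ↦ (x_{j+1}, x_j * x_{j+1})` (the paper's `x_j * x_{j+1}` is Mathlib's
`x_{j+1} ◃ x_j`), and beads by
`(a_j, a_{j+1}) ↦ (a_{j+1}, x_{j+1}·a_j + a_{j+1} − (x_j*x_{j+1})·a_{j+1})`. -/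
def posStep {X G : Type*} [Quandle X] [AddCommGroup G]
    [DistribMulAction (Rack.EnvelGroup X) G]
    (j : ℕ) (s : (ℕ → X) × (ℕ → G)) : (ℕ → X) × (ℕ → G) :=
  (Function.update (Function.update s.1 j (s.1 (j + 1))) (j + 1) (s.1 (j + 1) ◃ s.1 j),
   Function.update (Function.update s.2 j (s.2 (j + 1))) (j + 1)
     (iota X (s.1 (j + 1)) • s.2 j + s.2 (j + 1) -
       iota X (s.1 (j + 1) ◃ s.1 j) • s.2 (j + 1)))

/-- Transformation associated to a braid word, applied letter by letter from bottom to
top; a letter `(j, true)` is `σ_j` and `(j, false)` is `σ_j⁻¹`. -/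
def wordAction {σ : Type*} (pos neg : ℕ → σ → σ) : List (ℕ × Bool) → σ → σ
  | [], s => s
  | l :: w, s => wordAction pos neg w ((if l.2 then pos l.1 else neg l.1) s)

/-- The coefficient `x_{k-1}·x_{k-2}·…·x_{i+1}` (descending, in the enveloping group)
of the `i`-th bead in the weighted sum on `k` strands. -/
def coeff {X : Type*} [Quandle X] (k i : ℕ) (x : ℕ → X) : Rack.EnvelGroup X :=
  ((List.range (k - 1 - i)).map fun m => iota X (x (k - 1 - m))).prod

/-- The weighted sum `WS_{x⃗}(a⃗) = Σ_i (x_{k-1}·…·x_{i+1})·a_i`. -/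
def weightedSum {X G : Type*} [Quandle X] [AddCommGroup G]
    [DistribMulAction (Rack.EnvelGroup X) G]
    (k : ℕ) (s : (ℕ → X) × (ℕ → G)) : G :=
  ∑ i ∈ Finset.range k, coeff k i s.1 • s.2 i

/-!
A letter `σ_j` only touches strands `j` and `j + 1`, so it leaves the coefficients of the beads
above `j + 1` alone; because `ι(x_{j+1} ◃ x_j) ι(x_{j+1}) = ι(x_{j+1}) ι(x_j)` in the enveloping
group, it also leaves those below `j` alone. The bead rule is exactly what makes the two remaining
terms add up to the same total, and `σ_j⁻¹` preserves the weighted sum since it is a right inverse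
of `σ_j`.
-/

theorem wordAction_invariant {σ β : Type*} {pos neg : ℕ → σ → σ} (f : σ → β) {P : ℕ → Prop}
    (hpos : ∀ j, P j → ∀ s, f (pos j s) = f s) (hneg : ∀ j, P j → ∀ s, f (neg j s) = f s) :
    ∀ w : List (ℕ × Bool), (∀ l ∈ w, P l.1) → ∀ s, f (wordAction pos neg w s) = f s
  | [], _, _ => rfl
  | l :: w, hw, s => by
    have hl : P l.1 := hw l List.mem_cons_self
    rw [wordAction,
      wordAction_invariant f hpos hneg w fun l' h => hw l' (List.mem_cons_of_mem _ h)]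
    split
    · exact hpos l.1 hl s
    · exact hneg l.1 hl s

section Coeff

variable {X : Type*} [Quandle X]

theorem iota_act_mul_iota (a b : X) : iota X (a ◃ b) * iota X a = iota X a * iota X b := by
  have h : iota X (a ◃ b) = iota X a * iota X b * (iota X a)⁻¹ := (Rack.toEnvelGroup X).map_act
  rw [h, inv_mul_cancel_right]

theorem coeff_congr {k i : ℕ} {x x' : ℕ → X} (h : ∀ m, i < m → m < k → x m = x' m) :
    coeff k i x = coeff k i x' := by
  refine congrArg List.prod (List.map_congr_left fun m hm => ?_)
  rw [List.mem_range] at hm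
  rw [h (k - 1 - m) (by omega) (by omega)]

theorem coeff_succ_self (i : ℕ) (x : ℕ → X) : coeff (i + 1) i x = 1 := by
  simp [coeff]

theorem coeff_succ_left {n i : ℕ} (h : i < n) (x : ℕ → X) :
    coeff (n + 1) i x = iota X (x n) * coeff n i x := by
  rw [coeff, coeff, show n + 1 - 1 - i = n - 1 - i + 1 by omega, List.range_succ_eq_map,
    List.map_cons, List.prod_cons, List.map_map]
  congr 3
  funext m
  simp only [Function.comp_apply]
  congr 2
  omega

theorem coeff_mul_coeff {k i j : ℕ} (hij : i ≤ j) (hjk : j < k) (x : ℕ → X) :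
    coeff k j x * coeff (j + 1) i x = coeff k i x := by
  rw [coeff, coeff, coeff, show k - 1 - i = k - 1 - j + (j - i) by omega, List.range_add,
    List.map_append, List.prod_append, List.map_map]
  congr 3
  funext m
  simp only [Function.comp_apply]
  congr 2
  omega

end Coeff

section PosStep

variable {X G : Type*} [Quandle X] [AddCommGroup G] [DistribMulAction (Rack.EnvelGroup X) G]
  (j : ℕ) (s : (ℕ → X) × (ℕ → G))

theorem posStep_fst_self : (posStep (G := G) j s).1 j = s.1 (j + 1) := by
  simp [posStep]

theorem posStep_fst_succ : (posStep (G := G) j s).1 (j + 1) = s.1 (j + 1) ◃ s.1 j := by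
  simp [posStep]

theorem posStep_fst_of_ne {m : ℕ} (h₀ : m ≠ j) (h₁ : m ≠ j + 1) :
    (posStep (G := G) j s).1 m = s.1 m := by
  simp [posStep, Function.update_of_ne h₀, Function.update_of_ne h₁]

theorem posStep_snd_self : (posStep j s).2 j = s.2 (j + 1) := by
  simp [posStep]

theorem posStep_snd_succ : (posStep j s).2 (j + 1) =
    iota X (s.1 (j + 1)) • s.2 j + s.2 (j + 1) - iota X (s.1 (j + 1) ◃ s.1 j) • s.2 (j + 1) := by
  simp [posStep]

theorem posStep_snd_of_ne {m : ℕ} (h₀ : m ≠ j) (h₁ : m ≠ j + 1) :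
    (posStep j s).2 m = s.2 m := by
  simp [posStep, Function.update_of_ne h₀, Function.update_of_ne h₁]

variable {j} {k i : ℕ}

theorem coeff_posStep_of_gt (hji : j < i) :
    coeff k i (posStep (G := G) j s).1 = coeff k i s.1 :=
  coeff_congr fun m him _ => posStep_fst_of_ne j s (by omega) (by omega)

theorem coeff_posStep_self (hjk : j + 1 < k) :
    coeff k j (posStep (G := G) j s).1 =
      coeff k (j + 1) s.1 * iota X (s.1 (j + 1) ◃ s.1 j) := by
  rw [← coeff_mul_coeff (Nat.le_succ j) hjk, coeff_posStep_of_gt s (Nat.lt_succ_self j),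
    coeff_succ_left (Nat.lt_succ_self j), coeff_succ_self, mul_one, posStep_fst_succ]

theorem coeff_posStep_of_lt (hij : i < j) (hjk : j + 1 < k) :
    coeff k i (posStep (G := G) j s).1 = coeff k i s.1 := by
  have hbelow : coeff j i (posStep (G := G) j s).1 = coeff j i s.1 :=
    coeff_congr fun m _ hmj => posStep_fst_of_ne j s (by omega) (by omega)
  rw [← coeff_mul_coeff (by omega : i ≤ j + 1) hjk (posStep j s).1,
    ← coeff_mul_coeff (by omega : i ≤ j + 1) hjk s.1,
    coeff_posStep_of_gt s (Nat.lt_succ_self j), coeff_succ_left (by omega),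
    coeff_succ_left hij, coeff_succ_left (by omega), coeff_succ_left hij, hbelow,
    posStep_fst_succ, posStep_fst_self, ← mul_assoc (iota X (s.1 (j + 1))),
    ← iota_act_mul_iota, mul_assoc]

theorem coeff_posStep_of_ne (hij : i ≠ j) (hjk : j + 1 < k) :
    coeff k i (posStep (G := G) j s).1 = coeff k i s.1 := by
  rcases Nat.lt_or_gt_of_ne hij with h | h
  · exact coeff_posStep_of_lt s h hjk
  · exact coeff_posStep_of_gt s h

theorem weightedSum_posStep (hjk : j + 2 ≤ k) :
    weightedSum k (posStep j s) = weightedSum k s := by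
  have hj : j ∈ Finset.range k := Finset.mem_range.2 (by omega)
  have hj₁ : j + 1 ∈ (Finset.range k).erase j :=
    Finset.mem_erase.2 ⟨by omega, Finset.mem_range.2 (by omega)⟩
  rw [weightedSum, weightedSum, ← Finset.add_sum_erase _ _ hj, ← Finset.add_sum_erase _ _ hj,
    ← Finset.add_sum_erase _ _ hj₁, ← Finset.add_sum_erase _ _ hj₁]
  have hrest : ∑ i ∈ ((Finset.range k).erase j).erase (j + 1),
      coeff k i (posStep j s).1 • (posStep j s).2 i =
      ∑ i ∈ ((Finset.range k).erase j).erase (j + 1), coeff k i s.1 • s.2 i := by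
    refine Finset.sum_congr rfl fun i hi => ?_
    obtain ⟨hi₁, hi₀, -⟩ := by simpa only [Finset.mem_erase] using hi
    rw [coeff_posStep_of_ne s hi₀ (by omega), posStep_snd_of_ne j s hi₀ hi₁]
  rw [hrest, coeff_posStep_self s (by omega), coeff_posStep_of_gt s (Nat.lt_succ_self j),
    posStep_snd_self, posStep_snd_succ, ← coeff_mul_coeff (Nat.le_succ j) (by omega) s.1,
    coeff_succ_left (Nat.lt_succ_self j), coeff_succ_self, mul_one]
  simp only [smul_sub, smul_add, mul_smul]
  abel

end PosStep

/-- For the bead transformation with `κ = 0` (`σ_j⁻¹` acting as the inverse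
transformation of `σ_j`), any braid word on `k` strands preserves the weighted sum:
`WS_{y⃗}(b⃗) = WS_{x⃗}(a⃗)`. -/
theorem weightedSum_preserved_by_braid_word
    {X G : Type*} [Quandle X] [AddCommGroup G]
    [DistribMulAction (Rack.EnvelGroup X) G]
    (k : ℕ) (neg : ℕ → (ℕ → X) × (ℕ → G) → (ℕ → X) × (ℕ → G))
    (hneg : ∀ j : ℕ, Function.LeftInverse (neg j) (posStep (G := G) j) ∧
      Function.RightInverse (neg j) (posStep (G := G) j))
    (w : List (ℕ × Bool)) (hw : ∀ l ∈ w, l.1 + 2 ≤ k)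
    (s : (ℕ → X) × (ℕ → G)) :
    weightedSum k (wordAction posStep neg w s) = weightedSum k s := by
  refine wordAction_invariant (weightedSum k) (P := fun j => j + 2 ≤ k)
    (fun j hj t => weightedSum_posStep t hj) (fun j hj t => ?_) w hw s
  calc weightedSum k (neg j t) = weightedSum k (posStep j (neg j t)) :=
        (weightedSum_posStep _ hj).symm
    _ = weightedSum k t := by rw [(hneg j).2 t]
end
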